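/- arXiv:1011.0270 — 2 statements merged into one kernel-verified Lean document; each statement's English description precedes it below -/
import Mathlib

section
/- Let α > 0, ζ, ξ, k be real constants. Define P, Q : (0,∞) → ℝ by P(t) = log(α t^k (1 + ζ² t^{−2k})) and Q(t) = ξ − ζ t^{−2k} / (α (1 + ζ² t^{−2k})). Then P and Q are twice differentiable on (0,∞) and satisfy the VTD equations: P''(t) + P'(t)/t = e^{2P(t)} (Q'(t))² and Q''(t) + Q'(t)/t = −2 P'(t) Q'(t) for all t > 0. -/
/-!
Write `b = t ^ (-2k)`, so that `b' = -2k b / t`. Then `P' = k (1 - ζ²b) / (t (1 + ζ²b))` and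
`Q' = 2kζ b / (α t (1 + ζ²b)²)` are rational in `t` and `b`, and differentiating them once more
turns both VTD equations into rational identities in `t` and `b`; for the first one this uses
`e^{2P} = α² (1 + ζ²b)² / b`, which holds because `t ^ (2k) * b = 1`.
-/

open Real Filter Topology

theorem Real.hasDerivAt_rpow_const_div {t : ℝ} (p : ℝ) (ht : t ≠ 0) :
    HasDerivAt (fun s : ℝ => s ^ p) (p * t ^ p / t) t := by
  simpa [rpow_sub_one ht, mul_div_assoc] using hasDerivAt_rpow_const (p := p) (Or.inl ht)

theorem Filter.EventuallyEq.deriv_eventuallyEq_of_hasDerivAt {𝕜 F : Type*}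
    [NontriviallyNormedField 𝕜] [NormedAddCommGroup F] [NormedSpace 𝕜 F] {f g g' : 𝕜 → F}
    {x : 𝕜} (hfg : f =ᶠ[𝓝 x] g) (hg : ∀ᶠ y in 𝓝 x, HasDerivAt g (g' y) y) :
    deriv f =ᶠ[𝓝 x] g' := by
  filter_upwards [hfg.eventuallyEq_nhds, hg] with y hfgy hgy
  exact (hgy.congr_of_eventuallyEq hfgy).deriv

namespace VTD

variable (α ζ ξ k : ℝ)

noncomputable def P (t : ℝ) : ℝ := log (α * t ^ k * (1 + ζ ^ 2 * t ^ (-(2 * k))))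

noncomputable def Q (t : ℝ) : ℝ := ξ - ζ * t ^ (-(2 * k)) / (α * (1 + ζ ^ 2 * t ^ (-(2 * k))))

noncomputable def P' (t : ℝ) : ℝ :=
  k * (1 - ζ ^ 2 * t ^ (-(2 * k))) / (t * (1 + ζ ^ 2 * t ^ (-(2 * k))))

noncomputable def Q' (t : ℝ) : ℝ :=
  2 * k * ζ * t ^ (-(2 * k)) / (α * t * (1 + ζ ^ 2 * t ^ (-(2 * k))) ^ 2)

lemma hasDerivAt_one_add_sq_mul_rpow {t : ℝ} (ht : t ≠ 0) :
    HasDerivAt (fun s : ℝ => 1 + ζ ^ 2 * s ^ (-(2 * k)))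
      (ζ ^ 2 * (-(2 * k) * t ^ (-(2 * k)) / t)) t :=
  ((hasDerivAt_rpow_const_div _ ht).const_mul _).const_add 1

variable {α ζ ξ k} {t : ℝ}

lemma hasDerivAt_P (hα : α ≠ 0) (ht : 0 < t) : HasDerivAt (P α ζ k) (P' ζ k t) t := by
  have hprod := ((hasDerivAt_rpow_const_div k ht.ne').const_mul α).fun_mul
    (hasDerivAt_one_add_sq_mul_rpow ζ k ht.ne')
  refine (hprod.log (by positivity)).congr_deriv ?_
  unfold P'
  field_simp
  ring

lemma hasDerivAt_Q (hα : α ≠ 0) (ht : 0 < t) : HasDerivAt (Q α ζ ξ k) (Q' α ζ k t) t := by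
  have hnum := (hasDerivAt_rpow_const_div (-(2 * k)) ht.ne').const_mul ζ
  have hden := (hasDerivAt_one_add_sq_mul_rpow ζ k ht.ne').const_mul α
  refine ((hnum.fun_div hden (by positivity)).const_sub ξ).congr_deriv ?_
  unfold Q'
  field_simp
  ring

lemma exp_two_mul_P (hα : α ≠ 0) (ht : 0 < t) :
    exp (2 * P α ζ k t) = α ^ 2 * (1 + ζ ^ 2 * t ^ (-(2 * k))) ^ 2 / t ^ (-(2 * k)) := by
  have hb : (t ^ k) ^ 2 * t ^ (-(2 * k)) = 1 := by
    rw [← rpow_natCast, ← rpow_mul ht.le, ← rpow_add ht, Nat.cast_ofNat,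
      show k * 2 + -(2 * k) = 0 by ring, rpow_zero]
  have hlog : 2 * P α ζ k t = log ((α * t ^ k * (1 + ζ ^ 2 * t ^ (-(2 * k)))) ^ 2) := by
    rw [P, log_pow, Nat.cast_ofNat]
  rw [hlog, exp_log (by positivity), eq_div_iff (by positivity)]
  linear_combination α ^ 2 * (1 + ζ ^ 2 * t ^ (-(2 * k))) ^ 2 * hb

lemma hasDerivAt_P' (hα : α ≠ 0) (ht : 0 < t) :
    HasDerivAt (P' ζ k) (exp (2 * P α ζ k t) * Q' α ζ k t ^ 2 - P' ζ k t / t) t := by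
  have hnum := (((hasDerivAt_rpow_const_div (-(2 * k)) ht.ne').const_mul (ζ ^ 2)).const_sub 1)
    |>.const_mul k
  have hden := (hasDerivAt_id' t).fun_mul (hasDerivAt_one_add_sq_mul_rpow ζ k ht.ne')
  refine (hnum.fun_div hden (by positivity)).congr_deriv ?_
  rw [exp_two_mul_P hα ht]
  unfold P' Q'
  field_simp
  ring

lemma hasDerivAt_Q' (hα : α ≠ 0) (ht : 0 < t) :
    HasDerivAt (Q' α ζ k) (-2 * P' ζ k t * Q' α ζ k t - Q' α ζ k t / t) t := by
  have hnum := (hasDerivAt_rpow_const_div (-(2 * k)) ht.ne').const_mul (2 * k * ζ)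
  have hden := ((hasDerivAt_id' t).const_mul α).fun_mul
    ((hasDerivAt_one_add_sq_mul_rpow ζ k ht.ne').fun_pow 2)
  refine (hnum.fun_div hden (by positivity)).congr_deriv ?_
  unfold P' Q'
  field_simp
  ring

end VTD

/-- The explicit functions `P(t) = log(α t^k (1 + ζ² t^{-2k}))` and
`Q(t) = ξ - ζ t^{-2k} / (α (1 + ζ² t^{-2k}))` are twice differentiable on `(0,∞)` and
solve the VTD equations `P'' + P'/t = e^{2P} (Q')²` and `Q'' + Q'/t = -2 P' Q'`. -/
theorem vtd_explicit_solution (α ζ ξ k : ℝ) (hα : 0 < α) (P Q : ℝ → ℝ)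
    (hP : ∀ t : ℝ, 0 < t →
      P t = Real.log (α * t ^ k * (1 + ζ ^ 2 * t ^ (-(2 * k)))))
    (hQ : ∀ t : ℝ, 0 < t →
      Q t = ξ - ζ * t ^ (-(2 * k)) / (α * (1 + ζ ^ 2 * t ^ (-(2 * k))))) :
    ∀ t : ℝ, 0 < t →
      DifferentiableAt ℝ P t ∧ DifferentiableAt ℝ (deriv P) t ∧
      DifferentiableAt ℝ Q t ∧ DifferentiableAt ℝ (deriv Q) t ∧
      deriv (deriv P) t + deriv P t / t = Real.exp (2 * P t) * (deriv Q t) ^ 2 ∧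
      deriv (deriv Q) t + deriv Q t / t = -2 * deriv P t * deriv Q t := by
  intro t ht
  have hPeq : P =ᶠ[𝓝 t] VTD.P α ζ k := eventually_of_mem (Ioi_mem_nhds ht) hP
  have hQeq : Q =ᶠ[𝓝 t] VTD.Q α ζ ξ k := eventually_of_mem (Ioi_mem_nhds ht) hQ
  have hdP : deriv P =ᶠ[𝓝 t] VTD.P' ζ k := hPeq.deriv_eventuallyEq_of_hasDerivAt <|
    (eventually_gt_nhds ht).mono fun _ hs => VTD.hasDerivAt_P hα.ne' hs
  have hdQ : deriv Q =ᶠ[𝓝 t] VTD.Q' α ζ k := hQeq.deriv_eventuallyEq_of_hasDerivAt <|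
    (eventually_gt_nhds ht).mono fun _ hs => VTD.hasDerivAt_Q hα.ne' hs
  have hddP := (VTD.hasDerivAt_P' hα.ne' ht).congr_of_eventuallyEq hdP
  have hddQ := (VTD.hasDerivAt_Q' hα.ne' ht).congr_of_eventuallyEq hdQ
  refine ⟨((VTD.hasDerivAt_P hα.ne' ht).congr_of_eventuallyEq hPeq).differentiableAt,
    hddP.differentiableAt,
    ((VTD.hasDerivAt_Q hα.ne' ht).congr_of_eventuallyEq hQeq).differentiableAt,
    hddQ.differentiableAt, ?_, ?_⟩
  · rw [hddP.deriv, hdP.eq_of_nhds, hdQ.eq_of_nhds, hPeq.eq_of_nhds]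
    ring
  · rw [hddQ.deriv, hdP.eq_of_nhds, hdQ.eq_of_nhds]
    ring
end

section
/- Let C₁, C₂, H : (0,∞) × ℝ → ℝ be continuously differentiable functions satisfying ∂_t C₁ = ∂_x C₂ + H and ∂_t C₂ = ∂_x C₁ on (0,∞) × ℝ. If C₁(t,x) = 0 for all (t,x) ∈ (0,∞) × ℝ, and C₂(t₀,x) = 0 for all x ∈ ℝ for some t₀ > 0, then C₂(t,x) = 0 and H(t,x) = 0 for all (t,x) ∈ (0,∞) × ℝ. -/
/-! Since `C₁ ≡ 0`, `∂ₜ C₂ = ∂ₓ C₁ = 0`, so each `C₂(·, x)` is constant on the connected set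
`(0, ∞)` and vanishes because it does at `t₀`; then `H = ∂ₜ C₁ - ∂ₓ C₂ = 0`. -/

noncomputable section

/-- Partial derivative in the first (time) variable. -/
def pdt (f : ℝ → ℝ → ℝ) (t x : ℝ) : ℝ := deriv (fun s => f s x) t

/-- Partial derivative in the second (space) variable. -/
def pdx (f : ℝ → ℝ → ℝ) (t x : ℝ) : ℝ := deriv (fun y => f t y) x

open Filter Topology

lemma pdt_eq_zero_of_eventually_eq_zero {f : ℝ → ℝ → ℝ} {t x : ℝ}
    (h : ∀ᶠ s in 𝓝 t, f s x = 0) : pdt f t x = 0 := by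
  rw [pdt, EventuallyEq.deriv_eq (f := fun _ => (0 : ℝ)) h, deriv_const]

lemma pdx_eq_zero_of_forall_eq_zero {f : ℝ → ℝ → ℝ} {t : ℝ} (h : ∀ y, f t y = 0) (x : ℝ) :
    pdx f t x = 0 := by
  simp only [pdx, h, deriv_const]

lemma DifferentiableOn.uncurry_left {f : ℝ → ℝ → ℝ} {U V : Set ℝ}
    (hf : DifferentiableOn ℝ (Function.uncurry f) (U ×ˢ V)) {x : ℝ} (hx : x ∈ V) :
    DifferentiableOn ℝ (fun s => f s x) U :=
  hf.comp (differentiableOn_id.prodMk (differentiableOn_const x)) fun _ hs => ⟨hs, hx⟩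

theorem constraint_propagation_general (C₁ C₂ H : ℝ → ℝ → ℝ)
    (hC₂reg : ContDiffOn ℝ 1 (Function.uncurry C₂) (Set.Ioi 0 ×ˢ Set.univ))
    (hsub₁ : ∀ t : ℝ, 0 < t → ∀ x : ℝ, pdt C₁ t x = pdx C₂ t x + H t x)
    (hsub₂ : ∀ t : ℝ, 0 < t → ∀ x : ℝ, pdt C₂ t x = pdx C₁ t x)
    (hC₁zero : ∀ t : ℝ, 0 < t → ∀ x : ℝ, C₁ t x = 0)
    (t₀ : ℝ) (ht₀ : 0 < t₀) (hC₂init : ∀ x : ℝ, C₂ t₀ x = 0) :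
    ∀ t : ℝ, 0 < t → ∀ x : ℝ, C₂ t x = 0 ∧ H t x = 0 := by
  have hpdtC₁ : ∀ t, 0 < t → ∀ x, pdt C₁ t x = 0 := fun t ht x =>
    pdt_eq_zero_of_eventually_eq_zero <| eventually_of_mem (Ioi_mem_nhds ht) fun s hs =>
      hC₁zero s hs x
  have hpdtC₂ : ∀ t, 0 < t → ∀ x, pdt C₂ t x = 0 := fun t ht x => by
    rw [hsub₂ t ht x, pdx_eq_zero_of_forall_eq_zero (hC₁zero t ht) x]
  have hC₂zero : ∀ t, 0 < t → ∀ x, C₂ t x = 0 := fun t ht x => by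
    rw [← hC₂init x]
    exact isOpen_Ioi.is_const_of_deriv_eq_zero isPreconnected_Ioi
      ((hC₂reg.differentiableOn one_ne_zero).uncurry_left (Set.mem_univ x))
      (fun s hs => hpdtC₂ s hs x) ht ht₀
  intro t ht x
  refine ⟨hC₂zero t ht x, ?_⟩
  have h := hsub₁ t ht x
  rwa [hpdtC₁ t ht x, pdx_eq_zero_of_forall_eq_zero (hC₂zero t ht) x, zero_add, eq_comm] at h

/-- If `C₁, C₂, H` are `C¹` on `(0,∞) × ℝ` and satisfy the subsidiary system
`∂_t C₁ = ∂ₓ C₂ + H`, `∂_t C₂ = ∂ₓ C₁` there, and if `C₁ ≡ 0` on `(0,∞) × ℝ` while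
`C₂(t₀,·) ≡ 0` for some `t₀ > 0`, then `C₂ ≡ 0` and `H ≡ 0` on `(0,∞) × ℝ`. -/
theorem constraint_propagation (C₁ C₂ H : ℝ → ℝ → ℝ)
    (hC₁reg : ContDiffOn ℝ 1 (Function.uncurry C₁) (Set.Ioi 0 ×ˢ Set.univ))
    (hC₂reg : ContDiffOn ℝ 1 (Function.uncurry C₂) (Set.Ioi 0 ×ˢ Set.univ))
    (hHreg : ContDiffOn ℝ 1 (Function.uncurry H) (Set.Ioi 0 ×ˢ Set.univ))
    (hsub₁ : ∀ t : ℝ, 0 < t → ∀ x : ℝ, pdt C₁ t x = pdx C₂ t x + H t x)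
    (hsub₂ : ∀ t : ℝ, 0 < t → ∀ x : ℝ, pdt C₂ t x = pdx C₁ t x)
    (hC₁zero : ∀ t : ℝ, 0 < t → ∀ x : ℝ, C₁ t x = 0)
    (t₀ : ℝ) (ht₀ : 0 < t₀) (hC₂init : ∀ x : ℝ, C₂ t₀ x = 0) :
    ∀ t : ℝ, 0 < t → ∀ x : ℝ, C₂ t x = 0 ∧ H t x = 0 :=
  constraint_propagation_general C₁ C₂ H hC₂reg hsub₁ hsub₂ hC₁zero t₀ ht₀ hC₂init
end
end
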